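/- arXiv:2409.13274 — 5 statements merged into one kernel-verified Lean document; each statement's English description precedes it below -/
import Mathlib

section
/- Let m ≥ 0 be an integer and Q(r) = √8·(m+1)·r^m/(1+r^(2m+2)). Then Q solves the Bogomol'nyi equation: ∂_r Q(r) - ((m + A_θ[Q](r))/r)·Q(r) = 0 for all r > 0, where A_θ[Q](r) = -(1/2)∫₀^r Q(s)² s ds. -/
open MeasureTheory

/-- The Jackiw–Pi vortex `Q` solves the Bogomol'nyi equation
`∂_r Q - ((m + A_θ[Q])/r) Q = 0` on `(0,∞)`. -/
theorem vortex_bogomolnyi (m : ℕ) (Q Aθ : ℝ → ℝ)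
    (hQ : ∀ r : ℝ, Q r = Real.sqrt 8 * (m + 1) * r ^ m / (1 + r ^ (2 * m + 2)))
    (hA : ∀ r : ℝ, Aθ r = -(1 / 2) * ∫ s in (0:ℝ)..r, (Q s) ^ 2 * s) :
    ∀ r : ℝ, 0 < r →
      deriv Q r - (((m : ℝ) + Aθ r) / r) * Q r = 0 := by
  have hs8 : Real.sqrt 8 ^ 2 = 8 := Real.sq_sqrt (by norm_num)
  have hden : ∀ s : ℝ, (0:ℝ) < 1 + s ^ (2*m+2) := by
    intro s
    have h : s ^ (2*m+2) = (s^(m+1))^2 := by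
      rw [← pow_mul]; ring_nf
    nlinarith [sq_nonneg (s^(m+1))]
  have hF : ∀ s : ℝ, HasDerivAt (fun s : ℝ => -(4*((m:ℝ)+1)) * (1 + s^(2*m+2))⁻¹)
      ((Q s)^2 * s) s := by
    intro s
    have h1 : HasDerivAt (fun s : ℝ => 1 + s^(2*m+2))
        (((2*m+2 : ℕ) : ℝ) * s^(2*m+2-1)) s := (hasDerivAt_pow _ s).const_add 1
    have h2 := (h1.inv (hden s).ne').const_mul (-(4*((m:ℝ)+1)))
    refine h2.congr_deriv ?_
    symm
    rw [hQ s]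
    have hpow : s ^ (2*m+2-1) = s^m * s^m * s := by
      rw [show 2*m+2-1 = m + m + 1 by omega, pow_add, pow_add, pow_one]
    rw [hpow]
    have hd := (hden s).ne'
    field_simp
    push_cast
    linear_combination (((m:ℝ)+1) * (s^m)^2 * s) * hs8
  intro r hr
  have hint : (∫ s in (0:ℝ)..r, (Q s) ^ 2 * s)
      = -(4*((m:ℝ)+1)) * (1 + r^(2*m+2))⁻¹ - (-(4*((m:ℝ)+1)) * (1 + (0:ℝ)^(2*m+2))⁻¹) := by
    apply intervalIntegral.integral_eq_sub_of_hasDerivAt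
    · intro s _; exact hF s
    · apply Continuous.intervalIntegrable
      have hQc : Continuous Q := by
        have : Q = fun s => Real.sqrt 8 * (m + 1) * s ^ m / (1 + s ^ (2 * m + 2)) :=
          funext hQ
        rw [this]
        exact (continuous_const.mul (continuous_pow m)).div
          (continuous_const.add (continuous_pow _)) (fun s => (hden s).ne')
      exact (hQc.pow 2).mul continuous_id
  have h0 : ((0:ℝ))^(2*m+2) = 0 := zero_pow (by omega)
  have hQfun : Q = fun s => Real.sqrt 8 * (m + 1) * s ^ m / (1 + s ^ (2 * m + 2)) :=
    funext hQ
  have hDQ : HasDerivAt Q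
      ((Real.sqrt 8 * (m + 1) * (((m:ℕ):ℝ) * r^(m-1)) * (1 + r^(2*m+2))
        - Real.sqrt 8 * (m + 1) * r ^ m * (((2*m+2 : ℕ):ℝ) * r^(2*m+2-1)))
        / (1 + r^(2*m+2))^2) r := by
    rw [hQfun]
    exact (((hasDerivAt_pow m r).const_mul (Real.sqrt 8 * ((m:ℝ) + 1))).div
      ((hasDerivAt_pow (2*m+2) r).const_add 1) (hden r).ne')
  have hd := (hden r).ne'
  have hrne := hr.ne'
  have hm1 : ((m:ℕ):ℝ) * r^(m-1) = (m:ℝ) * r^m / r := by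
    rw [eq_div_iff hrne]
    cases m with
    | zero => simp
    | succ k => simp only [Nat.add_sub_cancel, pow_succ]; push_cast; ring
  have hp1 : r ^ (2*m+2-1) = r^m * r^m * r := by
    rw [show 2*m+2-1 = m + m + 1 by omega, pow_add, pow_add, pow_one]
  have hp2 : r ^ (2*m+2) = r^m * r^m * r * r := by
    rw [show 2*m+2 = m + m + 1 + 1 by omega, pow_add, pow_add, pow_add]; ring
  rw [hDQ.deriv, hA r, hint, h0, hQ r, hm1, hp1, hp2]
  have hd2 : (1:ℝ) + r^m * r^m * r * r ≠ 0 := by rw [← hp2]; exact hd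
  field_simp
  push_cast
  ring
end

section
/- For every f ∈ C_c^∞((0,∞); ℂ), one has ‖f‖_{L^∞}² ≤ 2 · (∫₀^∞ |f(r)|²/r² · r dr)^(1/2) · (∫₀^∞ |f'(r)|² r dr)^(1/2). -/
open MeasureTheory Set Filter

/-- Key step of the Hardy–Sobolev inequality: for
`f ∈ C_c^∞((0,∞); ℂ)`,
`‖f‖_{L^∞}² ≤ 2 (∫₀^∞ |f|²/r² · r dr)^(1/2) (∫₀^∞ |f'|² r dr)^(1/2)`. -/
theorem hardy_sobolev_key (f : ℝ → ℂ)
    (hf_smooth : ContDiff ℝ (⊤ : ℕ∞) f)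
    (hf_supp : HasCompactSupport f)
    (hf_pos : tsupport f ⊆ Set.Ioi (0:ℝ)) :
    ∀ x : ℝ, ‖f x‖ ^ 2 ≤
      2 * Real.sqrt (∫ r in Set.Ioi (0:ℝ), ‖f r‖ ^ 2 / r ^ 2 * r) *
        Real.sqrt (∫ r in Set.Ioi (0:ℝ), ‖deriv f r‖ ^ 2 * r) := by
  intro x
  by_cases hne : (tsupport f).Nonempty
  case neg =>
    have hf0 : f = 0 := by
      funext r
      exact image_eq_zero_of_notMem_tsupport (by
        simp [Set.not_nonempty_iff_eq_empty.1 hne])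
    rw [hf0]
    simp
  -- setup
  have hKc : IsCompact (tsupport f) := hf_supp
  set ε := sInf (tsupport f) with hεdef
  have hεK : ε ∈ tsupport f := hKc.sInf_mem hne
  have εpos : (0:ℝ) < ε := hf_pos hεK
  have hKsub : tsupport f ⊆ Ici ε := fun r hr => csInf_le hKc.bddBelow hr
  have hfd : Differentiable ℝ f := hf_smooth.differentiable (by simp)
  have hf'c : Continuous (deriv f) := hf_smooth.continuous_deriv (by simp)
  have hf'supp : HasCompactSupport (deriv f) := hf_supp.deriv
  have hfz : ∀ r, r ∉ tsupport f → f r = 0 := fun r hr =>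
    image_eq_zero_of_notMem_tsupport hr
  have hf'z : ∀ r, r ∉ tsupport f → deriv f r = 0 := by
    intro r hr
    by_contra h
    exact hr (support_deriv_subset h)
  set u : ℝ → ℝ := fun r => ‖f r‖ / Real.sqrt (max r ε) with hu
  set v : ℝ → ℝ := fun r => ‖deriv f r‖ * Real.sqrt r with hv
  have hsq : ∀ r : ℝ, (0:ℝ) < Real.sqrt (max r ε) := fun r =>
    Real.sqrt_pos.2 (lt_max_of_lt_right εpos)
  have hu_cont : Continuous u :=
    (hfd.continuous.norm).div
      ((continuous_id.max continuous_const).sqrt) (fun r => (hsq r).ne')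
  have hv_cont : Continuous v := hf'c.norm.mul Real.continuous_sqrt
  have hu_supp : HasCompactSupport u := by
    apply hf_supp.mono
    intro r hr
    simp only [hu, Function.mem_support, ne_eq, div_eq_zero_iff, norm_eq_zero,
      not_or] at hr
    exact hr.1
  have hv_supp : HasCompactSupport v := by
    apply hf'supp.mono
    intro r hr
    simp only [hv, Function.mem_support, ne_eq, mul_eq_zero, norm_eq_zero,
      not_or] at hr
    exact hr.1
  have hu_mem : MemLp u (ENNReal.ofReal 2) (volume.restrict (Ioi (0:ℝ))) :=
    hu_cont.memLp_of_hasCompactSupport hu_supp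
  have hv_mem : MemLp v (ENNReal.ofReal 2) (volume.restrict (Ioi (0:ℝ))) :=
    hv_cont.memLp_of_hasCompactSupport hv_supp
  have hu_nn : ∀ r, 0 ≤ u r := fun r => div_nonneg (norm_nonneg _) (Real.sqrt_nonneg _)
  have hv_nn : ∀ r, 0 ≤ v r := fun r => mul_nonneg (norm_nonneg _) (Real.sqrt_nonneg _)
  have hpq : Real.HolderConjugate 2 2 := Real.HolderConjugate.two_two
  have CS := integral_mul_le_Lp_mul_Lq_of_nonneg hpq
    (ae_of_all _ hu_nn) (ae_of_all _ hv_nn) hu_mem hv_mem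
  -- pointwise identities
  have huv : ∀ r, u r * v r = ‖f r‖ * ‖deriv f r‖ := by
    intro r
    by_cases hrK : r ∈ tsupport f
    · have hrε : ε ≤ r := hKsub hrK
      have h0 : (0:ℝ) < r := lt_of_lt_of_le εpos hrε
      have hmax : max r ε = r := max_eq_left hrε
      have hs : Real.sqrt r ≠ 0 := (Real.sqrt_pos.2 h0).ne'
      simp only [hu, hv, hmax]
      field_simp
    · simp [hu, hv, hfz r hrK, hf'z r hrK]
  have hu2eq : ∀ r ∈ Ioi (0:ℝ), u r ^ 2 = ‖f r‖ ^ 2 / r ^ 2 * r := by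
    intro r hr
    by_cases hrK : r ∈ tsupport f
    · have hrε : ε ≤ r := hKsub hrK
      have h0 : (0:ℝ) < r := lt_of_lt_of_le εpos hrε
      have hmax : max r ε = r := max_eq_left hrε
      simp only [hu, hmax, div_pow, Real.sq_sqrt h0.le]
      field_simp
    · simp [hu, hfz r hrK]
  have hv2eq : ∀ r ∈ Ioi (0:ℝ), v r ^ 2 = ‖deriv f r‖ ^ 2 * r := by
    intro r hr
    simp [hv, mul_pow, Real.sq_sqrt (le_of_lt hr)]
  -- FTC part
  set g' : ℝ → ℝ := fun r => 2 * (inner ℝ (f r) (deriv f r) : ℝ) with hg'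
  have hgderiv : ∀ r : ℝ, HasDerivAt (fun t => ‖f t‖ ^ 2) (g' r) r := fun r =>
    ((hfd r).hasDerivAt).norm_sq
  have hg'cont : Continuous g' :=
    continuous_const.mul (hfd.continuous.inner hf'c)
  have hg'supp : HasCompactSupport g' := by
    apply hf_supp.mono
    intro r hr
    simp only [hg', Function.mem_support, ne_eq] at hr
    intro h0
    exact hr (by simp [h0])
  have hg'int : Integrable g' := hg'cont.integrable_of_hasCompactSupport hg'supp
  have htend : Tendsto (fun t => ‖f t‖ ^ 2) atTop (nhds 0) := by
    have hcs : HasCompactSupport (fun t => ‖f t‖ ^ 2) :=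
      hf_supp.comp_left (g := fun z : ℂ => ‖z‖ ^ 2) (by simp)
    exact hcs.is_zero_at_infty.mono_left atTop_le_cocompact
  have hFTC : ∫ r in Ioi x, g' r = 0 - ‖f x‖ ^ 2 :=
    integral_Ioi_of_hasDerivAt_of_tendsto
      ((hfd.continuous.norm.pow 2).continuousWithinAt)
      (fun r _ => hgderiv r) hg'int.integrableOn htend
  -- bound
  have hprod_int : Integrable (fun r => 2 * (‖f r‖ * ‖deriv f r‖)) := by
    apply Continuous.integrable_of_hasCompactSupport
    · exact continuous_const.mul (hfd.continuous.norm.mul hf'c.norm)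
    · apply hf_supp.mono
      intro r hr
      simp only [Function.mem_support, ne_eq] at hr
      intro h0
      exact hr (by simp [h0])
  have hbound : ∀ r, |g' r| ≤ 2 * (‖f r‖ * ‖deriv f r‖) := by
    intro r
    calc |g' r| = 2 * |(inner ℝ (f r) (deriv f r) : ℝ)| := by
          rw [hg', abs_mul]; norm_num
      _ ≤ 2 * (‖f r‖ * ‖deriv f r‖) := by
          have := abs_real_inner_le_norm (f r) (deriv f r)
          linarith
  have h2 : ‖f x‖ ^ 2 ≤ ∫ r in Ioi x, 2 * (‖f r‖ * ‖deriv f r‖) := by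
    have h1 : ‖f x‖ ^ 2 = -∫ r in Ioi x, g' r := by rw [hFTC]; ring
    rw [h1]
    calc -∫ r in Ioi x, g' r ≤ |∫ r in Ioi x, g' r| := neg_le_abs _
      _ ≤ ∫ r in Ioi x, |g' r| := by
          simpa [Real.norm_eq_abs] using
            norm_integral_le_integral_norm (μ := volume.restrict (Ioi x)) g'
      _ ≤ ∫ r in Ioi x, 2 * (‖f r‖ * ‖deriv f r‖) := by
          apply integral_mono hg'int.integrableOn.abs hprod_int.integrableOn
          exact hbound
  have h3 : (∫ r in Ioi x, 2 * (‖f r‖ * ‖deriv f r‖)) ≤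
      ∫ r, 2 * (‖f r‖ * ‖deriv f r‖) :=
    setIntegral_le_integral hprod_int
      (ae_of_all _ fun r => by positivity)
  have h4 : (∫ r, 2 * (‖f r‖ * ‖deriv f r‖)) =
      ∫ r in Ioi (0:ℝ), 2 * (‖f r‖ * ‖deriv f r‖) := by
    refine (setIntegral_eq_integral_of_forall_compl_eq_zero fun r hr => ?_).symm
    have hrK : r ∉ tsupport f := fun h => hr (hf_pos h)
    simp [hfz r hrK]
  have h5 : (∫ r in Ioi (0:ℝ), 2 * (‖f r‖ * ‖deriv f r‖)) =
      2 * ∫ r in Ioi (0:ℝ), u r * v r := by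
    rw [integral_const_mul]
    congr 1
    exact setIntegral_congr_fun measurableSet_Ioi fun r _ => (huv r).symm
  -- rewrite the Hölder conclusion
  have hA : (∫ r in Ioi (0:ℝ), u r ^ (2:ℝ)) =
      ∫ r in Ioi (0:ℝ), ‖f r‖ ^ 2 / r ^ 2 * r := by
    refine setIntegral_congr_fun measurableSet_Ioi fun r hr => ?_
    rw [show ((2:ℝ)) = ((2:ℕ):ℝ) by norm_num, Real.rpow_natCast, hu2eq r hr]
  have hB : (∫ r in Ioi (0:ℝ), v r ^ (2:ℝ)) =
      ∫ r in Ioi (0:ℝ), ‖deriv f r‖ ^ 2 * r := by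
    refine setIntegral_congr_fun measurableSet_Ioi fun r hr => ?_
    rw [show ((2:ℝ)) = ((2:ℕ):ℝ) by norm_num, Real.rpow_natCast, hv2eq r hr]
  have CS' : (∫ r in Ioi (0:ℝ), u r * v r) ≤
      Real.sqrt (∫ r in Ioi (0:ℝ), ‖f r‖ ^ 2 / r ^ 2 * r) *
        Real.sqrt (∫ r in Ioi (0:ℝ), ‖deriv f r‖ ^ 2 * r) := by
    calc (∫ r in Ioi (0:ℝ), u r * v r)
        ≤ (∫ r in Ioi (0:ℝ), u r ^ (2:ℝ)) ^ ((1:ℝ)/2) *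
            (∫ r in Ioi (0:ℝ), v r ^ (2:ℝ)) ^ ((1:ℝ)/2) := CS
      _ = _ := by rw [hA, hB, Real.sqrt_eq_rpow, Real.sqrt_eq_rpow]
  calc ‖f x‖ ^ 2 ≤ 2 * ∫ r in Ioi (0:ℝ), u r * v r := by
        rw [← h5, ← h4]; exact le_trans h2 h3
    _ ≤ 2 * (Real.sqrt (∫ r in Ioi (0:ℝ), ‖f r‖ ^ 2 / r ^ 2 * r) *
          Real.sqrt (∫ r in Ioi (0:ℝ), ‖deriv f r‖ ^ 2 * r)) := by
        have := CS'
        linarith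
    _ = _ := by ring
end

section
/- Let m ≥ 0, Q(r) = √8·(m+1)·r^m/(1+r^(2m+2)), A_θ[Q](r) = -(1/2)∫₀^r Q² s ds, and define for real-valued w the linearized Bogomol'nyi operator (L_Q w)(r) = w'(r) − ((m+A_θ[Q](r))/r) w(r) + (Q(r)/r) ∫₀^r Q(s) w(s) s ds. Then L_Q(ΛQ) = 0, where ΛQ = Q + rQ'. Moreover, extending L_Q to complex-valued w with ∫₀^r Re(Q̄ w) s ds in the nonlocal term, L_Q(iQ) = 0. -/
open MeasureTheory

noncomputable def JPc (m : ℕ) : ℝ := Real.sqrt 8 * ((m:ℝ)+1)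
noncomputable def JPD (m : ℕ) (s : ℝ) : ℝ := 1 + s^(2*m+2)
noncomputable def JPg (m : ℕ) (s : ℝ) : ℝ :=
  (JPc m * ((m:ℝ) * s^(m-1)) * JPD m s - JPc m * s^m * ((2*(m:ℝ)+2)*s^(2*m+1))) / (JPD m s)^2
noncomputable def JPh (m : ℕ) (s : ℝ) : ℝ :=
  JPc m * ((m:ℝ)+1) * (s^m * (1 - s^(2*m+2))) / (JPD m s)^2
noncomputable def JPh' (m : ℕ) (s : ℝ) : ℝ :=
  (JPc m * ((m:ℝ)+1) * ((m:ℝ)*s^(m-1)*(1-s^(2*m+2)) + s^m * (-((2*(m:ℝ)+2)*s^(2*m+1)))) * (JPD m s)^2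
    - JPc m * ((m:ℝ)+1) * (s^m*(1-s^(2*m+2))) * (2*(JPD m s)*((2*(m:ℝ)+2)*s^(2*m+1)))) / ((JPD m s)^2)^2

lemma JPD_pos (m : ℕ) (s : ℝ) : 0 < JPD m s := by
  have h : s ^ (2*m+2) = (s^(m+1))^2 := by rw [← pow_mul]; ring_nf
  have : (0:ℝ) ≤ s ^ (2*m+2) := by rw [h]; positivity
  unfold JPD; linarith

lemma JPc_sq (m : ℕ) : JPc m ^ 2 = 8 * ((m:ℝ)+1)^2 := by
  rw [JPc, mul_pow, Real.sq_sqrt (by norm_num : (0:ℝ) ≤ 8)]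

lemma JPD_hasDeriv (m : ℕ) (s : ℝ) :
    HasDerivAt (fun t : ℝ => JPD m t) ((2*(m:ℝ)+2) * s^(2*m+1)) s := by
  have e1 : 2*m+2-1 = 2*m+1 := by omega
  have := (hasDerivAt_pow (2*m+2) s).const_add 1
  rw [e1] at this
  refine this.congr_deriv ?_
  push_cast; ring

lemma JPQ_hasDeriv (m : ℕ) (s : ℝ) :
    HasDerivAt (fun t : ℝ => JPc m * t^m / JPD m t) (JPg m s) s := by
  have hnum : HasDerivAt (fun t : ℝ => JPc m * t^m) (JPc m * ((m:ℝ) * s^(m-1))) s :=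
    (hasDerivAt_pow m s).const_mul (JPc m)
  exact hnum.div (JPD_hasDeriv m s) (JPD_pos m s).ne'

lemma JPh_hasDeriv (m : ℕ) (s : ℝ) : HasDerivAt (fun t => JPh m t) (JPh' m s) s := by
  have hp1 : HasDerivAt (fun t : ℝ => t^m) ((m:ℝ)*s^(m-1)) s := hasDerivAt_pow m s
  have hp2 : HasDerivAt (fun t : ℝ => 1 - t^(2*m+2)) (-((2*(m:ℝ)+2)*s^(2*m+1))) s := by
    have e1 : 2*m+2-1 = 2*m+1 := by omega
    have := (hasDerivAt_pow (2*m+2) s).const_sub 1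
    rw [e1] at this
    refine this.congr_deriv ?_
    push_cast; ring
  have hnum : HasDerivAt (fun t : ℝ => JPc m * ((m:ℝ)+1) * (t^m * (1 - t^(2*m+2))))
      (JPc m * ((m:ℝ)+1) * ((m:ℝ)*s^(m-1)*(1-s^(2*m+2)) + s^m * (-((2*(m:ℝ)+2)*s^(2*m+1))))) s :=
    (hp1.mul hp2).const_mul _
  have hden : HasDerivAt (fun t : ℝ => (JPD m t)^2) (2*(JPD m s)*((2*(m:ℝ)+2)*s^(2*m+1))) s := by
    have := (JPD_hasDeriv m s).pow 2
    refine this.congr_deriv ?_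
    push_cast [JPD]; ring
  exact hnum.div hden (pow_ne_zero 2 (JPD_pos m s).ne')

lemma JP_lambda_eq (m : ℕ) (s : ℝ) :
    JPc m * s^m / JPD m s + s * JPg m s = JPh m s := by
  have hD := (JPD_pos m s).ne'
  rcases m with _ | k
  · unfold JPg JPh JPD at *
    norm_num at *
    field_simp
    ring
  · unfold JPg JPh JPD at *
    simp only [Nat.add_sub_cancel, Nat.cast_add, Nat.cast_one] at *
    field_simp
    ring

lemma JPD_cont (m : ℕ) : Continuous (fun s : ℝ => JPD m s) := by
  unfold JPD; continuity

lemma JPQ_cont (m : ℕ) : Continuous (fun s : ℝ => JPc m * s^m / JPD m s) :=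
  Continuous.div (by continuity) (JPD_cont m) (fun s => (JPD_pos m s).ne')

lemma JPg_cont (m : ℕ) : Continuous (fun s : ℝ => JPg m s) := by
  unfold JPg JPD
  exact Continuous.div (by continuity) (by continuity)
    (fun s => pow_ne_zero 2 (JPD_pos m s).ne')

lemma JPh_cont (m : ℕ) : Continuous (fun s : ℝ => JPh m s) := by
  unfold JPh JPD
  exact Continuous.div (by continuity) (by continuity)
    (fun s => pow_ne_zero 2 (JPD_pos m s).ne')

lemma JP_int1 (m : ℕ) (r : ℝ) :
    (∫ s in (0:ℝ)..r, (JPc m * s^m / JPD m s)^2 * s)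
      = 4*((m:ℝ)+1) * r^(2*m+2) / JPD m r := by
  have key : ∀ s : ℝ, HasDerivAt (fun t : ℝ => -(4*((m:ℝ)+1)) / JPD m t)
      ((JPc m * s^m / JPD m s)^2 * s) s := by
    intro s
    have := (hasDerivAt_const s (-(4*((m:ℝ)+1)))).div (JPD_hasDeriv m s) (JPD_pos m s).ne'
    refine this.congr_deriv ?_
    have hD := (JPD_pos m s).ne'
    rw [div_pow, mul_pow, JPc_sq]
    field_simp
    ring
  have hcont : Continuous (fun s : ℝ => (JPc m * s^m / JPD m s)^2 * s) :=
    ((JPQ_cont m).pow 2).mul continuous_id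
  rw [intervalIntegral.integral_eq_sub_of_hasDerivAt (fun s _ => key s)
    (hcont.intervalIntegrable 0 r)]
  have h0 : JPD m 0 = 1 := by unfold JPD; norm_num
  have hD := (JPD_pos m r).ne'
  rw [h0]
  unfold JPD at *
  field_simp
  ring

lemma JP_int2 (m : ℕ) (r : ℝ) :
    (∫ s in (0:ℝ)..r, (JPc m * s^m / JPD m s) * JPh m s * s)
      = 4*((m:ℝ)+1)^2 * r^(2*m+2) / (JPD m r)^2 := by
  have key : ∀ s : ℝ, HasDerivAt (fun t : ℝ => (t * (JPc m * t^m / JPD m t))^2 / 2)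
      ((JPc m * s^m / JPD m s) * JPh m s * s) s := by
    intro s
    have h1 : HasDerivAt (fun t : ℝ => t * (JPc m * t^m / JPD m t))
        (1 * (JPc m * s^m / JPD m s) + s * JPg m s) s :=
      (hasDerivAt_id s).mul (JPQ_hasDeriv m s)
    have := (h1.pow 2).div_const 2
    refine this.congr_deriv ?_
    rw [← JP_lambda_eq m s]
    ring
  have hcont : Continuous (fun s : ℝ => (JPc m * s^m / JPD m s) * JPh m s * s) :=
    ((JPQ_cont m).mul (JPh_cont m)).mul continuous_id
  rw [intervalIntegral.integral_eq_sub_of_hasDerivAt (fun s _ => key s)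
    (hcont.intervalIntegrable 0 r)]
  have hD := (JPD_pos m r).ne'
  have h0 : JPD m 0 = 1 := by unfold JPD; norm_num
  rw [h0]
  rw [mul_pow, div_pow, mul_pow, JPc_sq]
  field_simp
  ring

lemma JP_bogo (m : ℕ) (r : ℝ) (hr : 0 < r) :
    JPg m r = (((m:ℝ) + (-(2*((m:ℝ)+1)) * r^(2*m+2) / JPD m r)) / r) * (JPc m * r^m / JPD m r) := by
  have hD := (JPD_pos m r).ne'
  rcases m with _ | k
  · unfold JPg JPD at *
    norm_num at *
    field_simp
  · unfold JPg JPD at *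
    simp only [Nat.add_sub_cancel, Nat.cast_add, Nat.cast_one] at *
    field_simp
    ring

lemma JP_final (m : ℕ) (r : ℝ) (hr : 0 < r) :
    JPh' m r - (((m:ℝ) + (-(2*((m:ℝ)+1)) * r^(2*m+2) / JPD m r)) / r) * JPh m r
      + ((JPc m * r^m / JPD m r) / r) * (4*((m:ℝ)+1)^2 * r^(2*m+2) / (JPD m r)^2) = 0 := by
  have hD := (JPD_pos m r).ne'
  rcases m with _ | k
  · unfold JPh' JPh JPD JPc at *
    norm_num at *
    field_simp
    ring
  · unfold JPh' JPh JPD JPc at *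
    simp only [Nat.add_sub_cancel, Nat.cast_add, Nat.cast_one] at *
    field_simp
    ring

/-- `ΛQ` and `iQ` lie in the kernel of the linearized
Bogomol'nyi operator `L_Q w = ∂_r w − ((m+A_θ[Q])/r)w + (Q/r)∫₀^r Re(Q̄ w) s ds`
at the Jackiw–Pi vortex `Q`. -/
theorem kernel_of_linearized_bogomolnyi (m : ℕ) (Q Aθ : ℝ → ℝ)
    (hQ : ∀ r : ℝ, Q r = Real.sqrt 8 * (m + 1) * r ^ m / (1 + r ^ (2 * m + 2)))
    (hA : ∀ r : ℝ, Aθ r = -(1 / 2) * ∫ s in (0:ℝ)..r, (Q s) ^ 2 * s)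
    (LQ : (ℝ → ℂ) → ℝ → ℂ)
    (hLQ : ∀ (w : ℝ → ℂ) (r : ℝ), LQ w r =
      deriv w r - ((((m : ℝ) + Aθ r) / r : ℝ) : ℂ) * w r +
        ((Q r / r : ℝ) : ℂ) * ((∫ s in (0:ℝ)..r, Q s * (w s).re * s : ℝ) : ℂ)) :
    ∀ r : ℝ, 0 < r →
      LQ (fun s => ((Q s + s * deriv Q s : ℝ) : ℂ)) r = 0 ∧
      LQ (fun s => Complex.I * (Q s : ℂ)) r = 0 := by
  intro r hr
  have hQf : ∀ s : ℝ, Q s = JPc m * s^m / JPD m s := by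
    intro s; rw [hQ]; rfl
  have hQfun : Q = fun s : ℝ => JPc m * s^m / JPD m s := funext hQf
  have hQ' : ∀ s : ℝ, HasDerivAt Q (JPg m s) s := by
    intro s; rw [hQfun]; exact JPQ_hasDeriv m s
  have hderiv : deriv Q = JPg m := funext fun s => (hQ' s).deriv
  have hAθ : Aθ r = (-(2*((m:ℝ)+1)) * r^(2*m+2) / JPD m r) := by
    rw [hA]
    simp only [hQf]
    rw [JP_int1]
    have hD := (JPD_pos m r).ne'
    field_simp
    ring
  constructor
  · -- ΛQ
    rw [hLQ]
    simp only [hderiv, hQf, JP_lambda_eq, Complex.ofReal_re]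
    rw [((JPh_hasDeriv m r).ofReal_comp).deriv, hAθ, JP_int2]
    rw [← Complex.ofReal_mul, ← Complex.ofReal_mul, ← Complex.ofReal_sub,
      ← Complex.ofReal_add, Complex.ofReal_eq_zero]
    exact JP_final m r hr
  · -- iQ
    rw [hLQ]
    have hw : HasDerivAt (fun s : ℝ => Complex.I * (Q s : ℂ)) (Complex.I * (JPg m r : ℂ)) r :=
      ((hQ' r).ofReal_comp).const_mul Complex.I
    rw [hw.deriv]
    have hint : (∫ s in (0:ℝ)..r, Q s * (Complex.I * (Q s : ℂ)).re * s) = 0 := by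
      simp [Complex.mul_re]
    rw [hint, hAθ, hQf r, JP_bogo m r hr]
    push_cast
    ring
end

section
/- Let m ≥ 0, Q(r) = √8·(m+1)·r^m/(1+r^(2m+2)), and let L_Q be the linearization of the Bogomol'nyi operator at Q, i.e. L_Q w = ∂_r w − ((m+A_θ[Q])/r)w + (Q/r)∫₀^r Re(Q̄ w) s ds. Then L_Q( i (r²/4) Q ) = i (r/2) Q. Furthermore, with (L_Q^* v)(r) = −v'(r) − v(r)/r − ((m+A_θ[Q](r))/r) v(r) + Q(r) ∫_r^∞ Re( Q(s) conj(v(s)) ) ds, one has L_Q^*( i (r/2) Q ) = −i ΛQ, where ΛQ = Q + rQ'. -/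
open MeasureTheory

/-- Generalized kernel relations: `L_Q(i r²Q/4) = i (r/2) Q` and
`L_Q^*(i (r/2) Q) = −i ΛQ` for the linearized Bogomol'nyi operator `L_Q`
and its adjoint `L_Q^*` at the Jackiw–Pi vortex `Q`. -/
theorem generalized_kernel_relations (m : ℕ) (Q Aθ : ℝ → ℝ)
    (hQ : ∀ r : ℝ, Q r = Real.sqrt 8 * (m + 1) * r ^ m / (1 + r ^ (2 * m + 2)))
    (hA : ∀ r : ℝ, Aθ r = -(1 / 2) * ∫ s in (0:ℝ)..r, (Q s) ^ 2 * s)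
    (LQ LQstar : (ℝ → ℂ) → ℝ → ℂ)
    (hLQ : ∀ (w : ℝ → ℂ) (r : ℝ), LQ w r =
      deriv w r - ((((m : ℝ) + Aθ r) / r : ℝ) : ℂ) * w r +
        ((Q r / r : ℝ) : ℂ) * ((∫ s in (0:ℝ)..r, Q s * (w s).re * s : ℝ) : ℂ))
    (hLQstar : ∀ (v : ℝ → ℂ) (r : ℝ), LQstar v r =
      -deriv v r - v r / (r : ℂ) - ((((m : ℝ) + Aθ r) / r : ℝ) : ℂ) * v r +
        ((Q r : ℝ) : ℂ) * ((∫ s in Set.Ioi r, Q s * (v s).re : ℝ) : ℂ)) :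
    ∀ r : ℝ, 0 < r →
      LQ (fun s => Complex.I * ((s ^ 2 / 4 : ℝ) : ℂ) * (Q s : ℂ)) r =
        Complex.I * ((r / 2 : ℝ) : ℂ) * (Q r : ℂ) ∧
      LQstar (fun s => Complex.I * ((s / 2 : ℝ) : ℂ) * (Q s : ℂ)) r =
        -Complex.I * ((Q r + r * deriv Q r : ℝ) : ℂ) := by
  have hD : ∀ s : ℝ, (0:ℝ) < 1 + s ^ (2 * m + 2) := by
    intro s
    have h1 : s ^ (2 * m + 2) = (s ^ 2) ^ (m + 1) := by
      rw [← pow_mul]; ring_nf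
    have h2 : (0:ℝ) ≤ s ^ (2 * m + 2) := by
      rw [h1]; exact pow_nonneg (sq_nonneg s) _
    linarith
  have hsq8 : Real.sqrt 8 ^ 2 = 8 := Real.sq_sqrt (by norm_num)
  have hQsq : ∀ s : ℝ, Q s ^ 2 * s =
      8 * ((m:ℝ) + 1) ^ 2 * s ^ (2 * m + 1) / (1 + s ^ (2 * m + 2)) ^ 2 := by
    intro s
    rw [hQ s, div_pow, mul_pow, mul_pow, hsq8, ← pow_mul, div_mul_eq_mul_div]
    congr 1
    rw [mul_assoc, ← pow_succ, show m * 2 + 1 = 2 * m + 1 from by ring]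
  have hF : ∀ s : ℝ, HasDerivAt (fun x : ℝ => -4 * ((m:ℝ) + 1) / (1 + x ^ (2 * m + 2)))
      (Q s ^ 2 * s) s := by
    intro s
    have hden : HasDerivAt (fun x : ℝ => 1 + x ^ (2 * m + 2))
        (((2 * m + 2 : ℕ):ℝ) * s ^ (2 * m + 1)) s := by
      have := (hasDerivAt_pow (2 * m + 2) s).const_add (1:ℝ)
      simpa using this
    have h := (hasDerivAt_const s (-4 * ((m:ℝ) + 1))).div hden (hD s).ne'
    refine h.congr_deriv ?_
    rw [hQsq s]
    push_cast
    congr 1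
    ring
  have hQcont : Continuous Q := by
    have : Q = fun x => Real.sqrt 8 * ((m:ℝ) + 1) * x ^ m / (1 + x ^ (2 * m + 2)) :=
      funext hQ
    rw [this]
    exact Continuous.div (by continuity) (by continuity) fun x => (hD x).ne'
  have hAval : ∀ r : ℝ, Aθ r = -2 * ((m:ℝ) + 1) * r ^ (2 * m + 2) / (1 + r ^ (2 * m + 2)) := by
    intro r
    rw [hA r]
    have hint : ∫ s in (0:ℝ)..r, Q s ^ 2 * s =
        (-4 * ((m:ℝ) + 1) / (1 + r ^ (2 * m + 2))) - (-4 * ((m:ℝ) + 1) / (1 + (0:ℝ) ^ (2 * m + 2))) := by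
      apply intervalIntegral.integral_eq_sub_of_hasDerivAt
      · intro s _; exact hF s
      · exact ((hQcont.pow 2).mul continuous_id).intervalIntegrable 0 r
    rw [hint]
    have h0 : (0:ℝ) ^ (2 * m + 2) = 0 := zero_pow (by omega)
    rw [h0]
    have hDne := (hD r).ne'
    field_simp
    ring
  have hQd : ∀ r : ℝ, r ≠ 0 → HasDerivAt Q ((((m:ℝ) + Aθ r) / r) * Q r) r := by
    intro r hr0
    have hnum : HasDerivAt (fun x : ℝ => Real.sqrt 8 * ((m:ℝ) + 1) * x ^ m)
        (Real.sqrt 8 * ((m:ℝ) + 1) * ((m:ℕ) * r ^ (m - 1))) r :=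
      (hasDerivAt_pow m r).const_mul _
    have hden : HasDerivAt (fun x : ℝ => 1 + x ^ (2 * m + 2))
        (((2 * m + 2 : ℕ):ℝ) * r ^ (2 * m + 1)) r := by
      have := (hasDerivAt_pow (2 * m + 2) r).const_add (1:ℝ)
      simpa using this
    have h := hnum.div hden (hD r).ne'
    have hfun : Q = fun x => Real.sqrt 8 * ((m:ℝ) + 1) * x ^ m / (1 + x ^ (2 * m + 2)) :=
      funext hQ
    have hQ' : HasDerivAt Q
        ((Real.sqrt 8 * ((m:ℝ) + 1) * ((m:ℕ) * r ^ (m - 1)) * (1 + r ^ (2 * m + 2)) -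
          Real.sqrt 8 * ((m:ℝ) + 1) * r ^ m * (((2 * m + 2 : ℕ):ℝ) * r ^ (2 * m + 1))) /
          (1 + r ^ (2 * m + 2)) ^ 2) r := by
      rw [hfun]; exact h
    convert hQ' using 1
    rw [hAval r, hQ r]
    have hm1 : (m:ℝ) * r ^ (m - 1) = (m:ℝ) * r ^ m / r := by
      rw [eq_div_iff hr0]
      cases m with
      | zero => simp
      | succ n => simp [pow_succ]; ring
    have hDne := (hD r).ne'
    push_cast at hm1 ⊢
    rw [hm1]
    field_simp
    ring
  intro r hr
  have hr0 : r ≠ 0 := hr.ne'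
  have hrC : (r:ℂ) ≠ 0 := by exact_mod_cast hr0
  have hQdr := hQd r hr0
  have hQderiv : deriv Q r = (((m:ℝ) + Aθ r) / r) * Q r := hQdr.deriv
  constructor
  · rw [hLQ]
    have hre : (fun s : ℝ => Q s * (Complex.I * ((s ^ 2 / 4 : ℝ) : ℂ) * (Q s : ℂ)).re * s)
        = fun _ => (0:ℝ) := by
      funext s
      simp only [Complex.mul_re, Complex.mul_im, Complex.I_re, Complex.I_im,
        Complex.ofReal_re, Complex.ofReal_im]
      ring
    rw [hre]
    simp only [intervalIntegral.integral_zero]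
    have hg : HasDerivAt (fun s : ℝ => s ^ 2 / 4 * Q s)
        (r / 2 * Q r + r ^ 2 / 4 * ((((m:ℝ) + Aθ r) / r) * Q r)) r := by
      have h2 : HasDerivAt (fun s : ℝ => s ^ 2 / 4) (r / 2) r := by
        have := (hasDerivAt_pow 2 r).div_const 4
        refine this.congr_deriv ?_; push_cast; ring
      exact h2.mul hQdr
    have hfeq : (fun s : ℝ => Complex.I * ((s ^ 2 / 4 : ℝ) : ℂ) * (Q s : ℂ))
        = fun s : ℝ => Complex.I * ((s ^ 2 / 4 * Q s : ℝ) : ℂ) := by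
      funext s; push_cast; ring
    have hw : HasDerivAt (fun s : ℝ => Complex.I * ((s ^ 2 / 4 : ℝ) : ℂ) * (Q s : ℂ))
        (Complex.I *
          ((r / 2 * Q r + r ^ 2 / 4 * ((((m:ℝ) + Aθ r) / r) * Q r) : ℝ) : ℂ)) r := by
      rw [hfeq]
      exact (hg.ofReal_comp).const_mul Complex.I
    rw [hw.deriv]
    push_cast
    ring
  · rw [hLQstar]
    have hre : (fun s : ℝ => Q s * (Complex.I * ((s / 2 : ℝ) : ℂ) * (Q s : ℂ)).re)
        = fun _ => (0:ℝ) := by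
      funext s
      simp only [Complex.mul_re, Complex.mul_im, Complex.I_re, Complex.I_im,
        Complex.ofReal_re, Complex.ofReal_im]
      ring
    rw [hre]
    simp only [integral_zero]
    have hg : HasDerivAt (fun s : ℝ => s / 2 * Q s)
        (1 / 2 * Q r + r / 2 * ((((m:ℝ) + Aθ r) / r) * Q r)) r := by
      have h2 : HasDerivAt (fun s : ℝ => s / 2) (1 / 2 : ℝ) r := by
        simpa using (hasDerivAt_id r).div_const 2
      exact h2.mul hQdr
    have hfeq : (fun s : ℝ => Complex.I * ((s / 2 : ℝ) : ℂ) * (Q s : ℂ))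
        = fun s : ℝ => Complex.I * ((s / 2 * Q s : ℝ) : ℂ) := by
      funext s; push_cast; ring
    have hv : HasDerivAt (fun s : ℝ => Complex.I * ((s / 2 : ℝ) : ℂ) * (Q s : ℂ))
        (Complex.I *
          ((1 / 2 * Q r + r / 2 * ((((m:ℝ) + Aθ r) / r) * Q r) : ℝ) : ℂ)) r := by
      rw [hfeq]
      exact (hg.ofReal_comp).const_mul Complex.I
    rw [hv.deriv, hQderiv]
    push_cast
    linear_combination (-(Complex.I * ((Q r : ℝ) : ℂ) / 2)) * (mul_inv_cancel₀ hrC)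
end

section
/- Let m ≥ 0 be an integer and u ∈ C_c^∞((0,∞); ℂ) (in particular u vanishes near r = 0), and set A_θ[u](r) = -(1/2)∫₀^r |u(s)|² s ds. Then ∫₀^∞ [ (1/2)|u'(r)|² + (1/2)((m+A_θ[u](r))/r)² |u(r)|² − (1/4)|u(r)|⁴ ] r dr = (1/2) ∫₀^∞ | u'(r) − ((m+A_θ[u](r))/r) u(r) |² r dr. -/
open MeasureTheory

lemma key_norm (a b : ℂ) (c : ℝ) :
    ‖a - (c:ℂ)*b‖^2 = ‖a‖^2 - 2*c*(b.re*a.re + b.im*a.im) + c^2*‖b‖^2 := by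
  simp only [Complex.sq_norm, Complex.normSq_apply,
    Complex.sub_re, Complex.sub_im, Complex.mul_re, Complex.mul_im,
    Complex.ofReal_re, Complex.ofReal_im]
  ring

/-- Self-dual expression of the energy for the m-equivariant
Chern–Simons–Schrödinger equation: for `u ∈ C_c^∞((0,∞);ℂ)`,
`∫₀^∞ [½|u'|² + ½((m+A_θ[u])/r)²|u|² − ¼|u|⁴] r dr = ½∫₀^∞ |D_u u|² r dr`. -/
theorem self_dual_energy (m : ℕ) (u : ℝ → ℂ)
    (hu_smooth : ContDiff ℝ (⊤ : ℕ∞) u)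
    (hu_supp : HasCompactSupport u)
    (hu_pos : tsupport u ⊆ Set.Ioi (0:ℝ))
    (Aθ : ℝ → ℝ)
    (hA : ∀ r : ℝ, Aθ r = -(1 / 2) * ∫ s in (0:ℝ)..r, ‖u s‖ ^ 2 * s) :
    ∫ r in Set.Ioi (0:ℝ),
        ((1 / 2) * ‖deriv u r‖ ^ 2 +
          (1 / 2) * (((m : ℝ) + Aθ r) / r) ^ 2 * ‖u r‖ ^ 2 -
          (1 / 4) * ‖u r‖ ^ 4) * r =
      (1 / 2) * ∫ r in Set.Ioi (0:ℝ),
        ‖deriv u r - ((((m : ℝ) + Aθ r) / r : ℝ) : ℂ) * u r‖ ^ 2 * r := by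
  have hu_diff : Differentiable ℝ u := hu_smooth.differentiable (by simp)
  have hu_cont : Continuous u := hu_smooth.continuous
  have hud_cont : Continuous (deriv u) := hu_smooth.continuous_deriv (by simp)
  set f : ℝ → ℝ := fun r => ‖u r‖^2 with hf_def
  have hf_cont : Continuous f := (hu_cont.norm).pow 2
  set B : ℝ → ℝ := fun r => (u r).re * (deriv u r).re + (u r).im * (deriv u r).im with hB_def
  have hB_cont : Continuous B := by
    apply Continuous.add
    · exact (Complex.continuous_re.comp hu_cont).mul (Complex.continuous_re.comp hud_cont)
    · exact (Complex.continuous_im.comp hu_cont).mul (Complex.continuous_im.comp hud_cont)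
  have hf_deriv : ∀ r, HasDerivAt f (2 * B r) r := by
    intro r
    have hp : HasDerivAt (fun r => (u r).re) ((deriv u r).re) r :=
      Complex.reCLM.hasFDerivAt.comp_hasDerivAt r (hu_diff r).hasDerivAt
    have hq : HasDerivAt (fun r => (u r).im) ((deriv u r).im) r :=
      Complex.imCLM.hasFDerivAt.comp_hasDerivAt r (hu_diff r).hasDerivAt
    have h := (hp.mul hp).add (hq.mul hq)
    have heq : f = fun r => (u r).re*(u r).re + (u r).im*(u r).im := by
      funext r
      simp only [hf_def, Complex.sq_norm, Complex.normSq_apply]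
    rw [heq]
    refine h.congr_deriv ?_
    show _ = (2:ℝ) * ((u r).re * (deriv u r).re + (u r).im * (deriv u r).im); ring
  -- derivative of Aθ
  have hg_cont : Continuous (fun s : ℝ => ‖u s‖^2 * s) := (hu_cont.norm.pow 2).mul continuous_id
  have hA_deriv : ∀ r, HasDerivAt Aθ (-(1/2) * (f r * r)) r := by
    intro r
    have h1 : HasDerivAt (fun t => ∫ s in (0:ℝ)..t, ‖u s‖^2 * s) (‖u r‖^2 * r) r :=
      intervalIntegral.integral_hasDerivAt_right (hg_cont.intervalIntegrable _ _)
        (hg_cont.stronglyMeasurableAtFilter _ _) hg_cont.continuousAt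
    have h2 := h1.const_mul (-(1/2) : ℝ)
    have hAe : Aθ = fun t => -(1/2) * ∫ s in (0:ℝ)..t, ‖u s‖^2 * s := funext hA
    rw [hAe]
    simpa [hf_def, mul_assoc] using h2
  have hA_cont : Continuous Aθ :=
    continuous_iff_continuousAt.mpr fun x => (hA_deriv x).continuousAt
  -- F and its derivative E
  set F : ℝ → ℝ := fun r => ((m:ℝ) + Aθ r) * f r with hF_def
  set E : ℝ → ℝ := fun r => -(1/2) * (f r * r) * f r + ((m:ℝ) + Aθ r) * (2 * B r) with hE_def
  have hF_deriv : ∀ r, HasDerivAt F (E r) r := by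
    intro r
    have h := ((hasDerivAt_const r ((m:ℝ))).add (hA_deriv r)).mul (hf_deriv r)
    refine h.congr_deriv ?_
    show _ = -(1/2) * (f r * r) * f r + ((m:ℝ) + Aθ r) * (2 * B r); simp only [Pi.add_apply]; ring
  have hE_cont : Continuous E := by
    apply Continuous.add
    · exact ((continuous_const.mul (hf_cont.mul continuous_id)).mul hf_cont)
    · exact (continuous_const.add hA_cont).mul (continuous_const.mul hB_cont)
  have hu0 : ∀ r ∉ tsupport u, u r = 0 := fun r hr => image_eq_zero_of_notMem_tsupport hr
  have hud0 : ∀ r ∉ tsupport u, deriv u r = 0 := by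
    intro r hr
    by_contra h
    exact hr (support_deriv_subset (Function.mem_support.mpr h))
  have hE0 : ∀ r ∉ tsupport u, E r = 0 := by
    intro r hr
    simp [hE_def, hB_def, hf_def, hu0 r hr]
  have hE_supp : HasCompactSupport E := by
    apply hu_supp.mono'
    intro r hr
    by_contra hmem
    exact (Function.mem_support.mp hr) (hE0 r hmem)
  have hE_int : Integrable E := hE_cont.integrable_of_hasCompactSupport hE_supp
  -- bound b
  obtain ⟨C, hC⟩ := hu_supp.isCompact.bddAbove
  set b : ℝ := max C 0 + 1 with hb_def
  have hb_pos : (0:ℝ) < b := by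
    have : (0:ℝ) ≤ max C 0 := le_max_right _ _
    simp only [hb_def]; linarith
  have hb_not : ∀ r, b ≤ r → r ∉ tsupport u := by
    intro r hr hmem
    have h1 : r ≤ C := hC hmem
    have h2 : C ≤ max C 0 := le_max_left _ _
    simp only [hb_def] at hr; linarith
  -- ∫_{Ioi 0} E = 0
  have h0nt : (0:ℝ) ∉ tsupport u := fun h => lt_irrefl 0 (Set.mem_Ioi.mp (hu_pos h))
  have hF0 : F 0 = 0 := by simp [hF_def, hf_def, hu0 0 h0nt]
  have hFb : F b = 0 := by simp [hF_def, hf_def, hu0 b (hb_not b le_rfl)]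
  have h1 : ∫ r in Set.Ioc (0:ℝ) b, E r = F b - F 0 := by
    rw [← intervalIntegral.integral_of_le hb_pos.le]
    exact intervalIntegral.integral_eq_sub_of_hasDerivAt (fun r _ => hF_deriv r)
      (hE_cont.intervalIntegrable _ _)
  have h2 : ∫ r in Set.Ioi b, E r = 0 := by
    apply setIntegral_eq_zero_of_forall_eq_zero
    intro r hr
    exact hE0 r (hb_not r (le_of_lt hr))
  have hEint0 : ∫ r in Set.Ioi (0:ℝ), E r = 0 := by
    rw [← Set.Ioc_union_Ioi_eq_Ioi hb_pos.le,
      setIntegral_union (Set.Ioc_disjoint_Ioi le_rfl) measurableSet_Ioi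
        hE_int.integrableOn hE_int.integrableOn, h1, h2, hFb, hF0]
    ring
  -- G
  set G : ℝ → ℝ := fun r => ‖deriv u r - ((((m:ℝ) + Aθ r) / r : ℝ) : ℂ) * u r‖^2 * r with hG_def
  have hG0 : ∀ r ∉ tsupport u, G r = 0 := by
    intro r hr
    simp [hG_def, hu0 r hr, hud0 r hr]
  have hG_cont : Continuous G := by
    rw [continuous_iff_continuousAt]
    intro r
    rcases lt_or_ge 0 r with hr | hr
    · have hc : ContinuousAt (fun r : ℝ => ((m:ℝ) + Aθ r) / r) r :=
        (continuousAt_const.add hA_cont.continuousAt).div continuousAt_id (ne_of_gt hr)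
      exact ((hud_cont.continuousAt.sub
        ((Complex.continuous_ofReal.continuousAt.comp hc).mul hu_cont.continuousAt)).norm.pow 2).mul
        continuousAt_id
    · have hrn : r ∉ tsupport u := by
        intro h
        exact absurd (hu_pos h) (by simpa using hr)
      have hnb : (tsupport u)ᶜ ∈ nhds r := (isClosed_tsupport u).isOpen_compl.mem_nhds hrn
      have hev : G =ᶠ[nhds r] (fun _ => (0:ℝ)) := by
        filter_upwards [hnb] with x hx using hG0 x hx
      exact hev.continuousAt
  have hG_supp : HasCompactSupport G := by
    apply hu_supp.mono'
    intro r hr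
    by_contra hmem
    exact (Function.mem_support.mp hr) (hG0 r hmem)
  have hG_int : Integrable G := hG_cont.integrable_of_hasCompactSupport hG_supp
  -- pointwise identity
  have hpt : ∀ r ∈ Set.Ioi (0:ℝ),
      ((1 / 2) * ‖deriv u r‖ ^ 2 +
          (1 / 2) * (((m : ℝ) + Aθ r) / r) ^ 2 * ‖u r‖ ^ 2 -
          (1 / 4) * ‖u r‖ ^ 4) * r
        = (1/2) * G r + (1/2) * E r := by
    intro r hr
    have hr0 : (r:ℝ) ≠ 0 := ne_of_gt hr
    have h4 : ‖u r‖^4 = (‖u r‖^2)^2 := by ring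
    simp only [hG_def, hE_def, hB_def, hf_def, key_norm (deriv u r) (u r) (((m:ℝ) + Aθ r)/r), h4]
    field_simp
    ring
  calc ∫ r in Set.Ioi (0:ℝ),
        ((1 / 2) * ‖deriv u r‖ ^ 2 +
          (1 / 2) * (((m : ℝ) + Aθ r) / r) ^ 2 * ‖u r‖ ^ 2 -
          (1 / 4) * ‖u r‖ ^ 4) * r
      = ∫ r in Set.Ioi (0:ℝ), ((1/2) * G r + (1/2) * E r) :=
        setIntegral_congr_fun measurableSet_Ioi hpt
    _ = (1/2) * (∫ r in Set.Ioi (0:ℝ), G r) + (1/2) * ∫ r in Set.Ioi (0:ℝ), E r := by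
        rw [integral_add ((hG_int.integrableOn).const_mul _) ((hE_int.integrableOn).const_mul _),
          integral_const_mul, integral_const_mul]
    _ = (1/2) * ∫ r in Set.Ioi (0:ℝ), G r := by rw [hEint0]; ring
end
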